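/- Let M ∈ ℂ with M ≠ 0 and y ∈ ℂ, set P = [[M, 1], [0, M⁻¹]], Q = [[M, 0], [2−y, M⁻¹]], and x = M + M⁻¹. Then for every integer m, the trace of (QP⁻¹)^m (Q⁻¹P)^m equals 2 + (y−2)(y+2−x²)·S_{m−1}(y)². -/

import Mathlib

/-!
`QP⁻¹` and `Q⁻¹P` lie in `SL₂(ℂ)` and both have trace `y`, so by Cayley–Hamilton each satisfies
`A² = yA - 1`, whence `A^m = S_{m-1}(y) A - S_{m-2}(y)` for all `m : ℤ`. Expanding the trace of
the product and using `S_{m-1}² - y S_{m-1} S_{m-2} + S_{m-2}² = 1` leaves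
`2 + S_{m-1}(y)² (tr(QP⁻¹Q⁻¹P) - 2)`, and a direct computation gives
`tr(QP⁻¹Q⁻¹P) - 2 = (y - 2)(y + 2 - x²)`.
-/

open Polynomial

/-- Integer-indexed Chebyshev-like polynomials: `S 0 = 1`, `S 1 = X`,
and `S (l+1) = X * S l - S (l-1)` for all `l : ℤ`
(equivalently `S l = U_l (v/2)` for the Chebyshev polynomials `U` of the second kind). -/
@[semireducible] noncomputable def chebS (R : Type*) [CommRing R] : ℤ → R[X]
  | 0 => 1
  | 1 => X
  | (n : ℕ) + 2 => X * chebS R (n + 1) - chebS R n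
  | -((n : ℕ) + 1) => X * chebS R (-n) - chebS R (-n + 1)
  termination_by n => Int.natAbs n + Int.natAbs (n - 1)

theorem chebS_eq_S (R : Type*) [CommRing R] : chebS R = Chebyshev.S R := by
  funext n
  induction n using chebS.induct with
  | case1 => rw [chebS.eq_1, Chebyshev.S.eq_1]
  | case2 => rw [chebS.eq_2, Chebyshev.S.eq_2]
  | case3 n h₁ h₀ => rw [chebS.eq_3, Chebyshev.S.eq_3, h₁, h₀]
  | case4 n h₀ h₁ => rw [chebS.eq_4, Chebyshev.S.eq_4, h₀, h₁]

namespace Matrix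

variable {R : Type*} [CommRing R]

theorem mul_self_eq_trace_smul_sub_det_smul (A : Matrix (Fin 2) (Fin 2) R) :
    A * A = A.trace • A - A.det • 1 := by
  ext i j
  fin_cases i <;> fin_cases j <;> simp [mul_apply, trace_fin_two, det_fin_two] <;> ring

theorem zpow_eq_eval_S_smul_sub {n : Type*} [Fintype n] [DecidableEq n] {A : Matrix n n R}
    {y : R} (hA : A * A = y • A - 1) (m : ℤ) :
    A ^ m = (Chebyshev.S R (m - 1)).eval y • A - (Chebyshev.S R (m - 2)).eval y • 1 := by
  have hunit : IsUnit A.det :=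
    isUnit_det_of_right_inverse (B := y • 1 - A)
      (by rw [mul_sub, Matrix.mul_smul, mul_one, hA]; abel)
  have step (k : ℤ) : ((Chebyshev.S R k).eval y • A - (Chebyshev.S R (k - 1)).eval y • 1) * A
      = (Chebyshev.S R (k + 1)).eval y • A - (Chebyshev.S R k).eval y • 1 := by
    rw [Chebyshev.S_add_one, sub_mul, smul_mul, smul_mul, one_mul, hA, eval_sub, eval_mul, eval_X]
    module
  induction m using Int.induction_on with
  | zero => simp [Chebyshev.S_neg_one, Chebyshev.S_neg_two]
  | succ i ih =>
    rw [zpow_add_one hunit, ih, show (i : ℤ) - 2 = i - 1 - 1 by ring, step]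
    ring_nf
  | pred i ih =>
    have h := step (-i - 2)
    rw [show -(i : ℤ) - 2 + 1 = -i - 1 by ring, show -(i : ℤ) - 2 - 1 = -i - 2 - 1 by ring] at h
    rw [zpow_sub_one hunit, ih, ← h, mul_nonsing_inv_cancel_right (h := hunit)]
    ring_nf

theorem trace_zpow_mul_zpow_of_det_eq_one {A B : Matrix (Fin 2) (Fin 2) R} {y : R}
    (hA : A.trace = y) (hB : B.trace = y) (hdA : A.det = 1) (hdB : B.det = 1) (m : ℤ) :
    (A ^ m * B ^ m).trace = 2 + (Chebyshev.S R (m - 1)).eval y ^ 2 * ((A * B).trace - 2) := by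
  have hA2 := mul_self_eq_trace_smul_sub_det_smul A
  have hB2 := mul_self_eq_trace_smul_sub_det_smul B
  rw [hA, hdA, one_smul] at hA2
  rw [hB, hdB, one_smul] at hB2
  have cassini := congrArg (eval y) (Chebyshev.S_sq_add_S_sq R (m - 2))
  rw [show m - 2 + 1 = m - 1 by ring] at cassini
  simp only [eval_sub, eval_add, eval_mul, eval_pow, eval_X, eval_one] at cassini
  rw [zpow_eq_eval_S_smul_sub hA2, zpow_eq_eval_S_smul_sub hB2]
  simp only [sub_mul, mul_sub, smul_mul, Matrix.mul_smul, one_mul, mul_one, smul_smul, trace_sub,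
    trace_smul, trace_one, hA, hB, smul_eq_mul, Fintype.card_fin]
  linear_combination 2 * cassini

end Matrix

/-- For `P = [[M,1],[0,M⁻¹]]`, `Q = [[M,0],[2-y,M⁻¹]]`, `x = M + M⁻¹` and every integer `m`,
`tr ((QP⁻¹)^m (Q⁻¹P)^m) = 2 + (y-2)(y+2-x²)·S_{m-1}(y)²`. -/
theorem even_word_trace (M y : ℂ) (hM : M ≠ 0) (m : ℤ) :
    Matrix.trace ((!![M, 0; 2 - y, M⁻¹] * (!![M, 1; 0, M⁻¹])⁻¹) ^ m
        * ((!![M, 0; 2 - y, M⁻¹])⁻¹ * !![M, 1; 0, M⁻¹]) ^ m)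
      = 2 + (y - 2) * (y + 2 - (M + M⁻¹)^2) * ((chebS ℂ (m - 1)).eval y) ^ 2 := by
  have hPinv : (!![M, 1; 0, M⁻¹])⁻¹ = !![M⁻¹, -1; 0, M] :=
    Matrix.inv_eq_right_inv (by simp [Matrix.one_fin_two, hM])
  have hQinv : (!![M, 0; 2 - y, M⁻¹])⁻¹ = !![M⁻¹, 0; y - 2, M] :=
    Matrix.inv_eq_right_inv (by simp [Matrix.one_fin_two, hM]; ring)
  rw [hPinv, hQinv, Matrix.trace_zpow_mul_zpow_of_det_eq_one (y := y), chebS_eq_S]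
  · simp only [Matrix.mul_fin_two, Matrix.trace_fin_two_of]
    field_simp
    ring
  all_goals
    simp only [Matrix.mul_fin_two, Matrix.trace_fin_two_of, Matrix.det_fin_two_of]
    field_simp
    ring
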